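/- arXiv:1804.07519 — 3 statements merged into one kernel-verified Lean document; each statement's English description precedes it below -/
import Mathlib

section
/- Let Γ be a Coxeter graph with canonical root system Φ and canonical bilinear form ⟨·,·⟩, and for α ∈ Φ let r_α denote the reflection x ↦ x - ⟨α,x⟩α. Define ≡ to be the equivalence relation on Φ generated by the relation α ≡₁ β ⟺ ⟨α,β⟩ ∉ {0, 1, -1}. Then for all α, β ∈ Φ with α ≡ β, we have α ≡ r_α(β) and β ≡ r_α(β). -/
open Real

/-- A Coxeter matrix on the set `S`, with `0` representing the label `∞`. -/
structure CoxeterMat (S : Type*) where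
  m : S → S → ℕ
  diagonal : ∀ s, m s s = 1
  symmetric : ∀ s t, m s t = m t s
  off_diagonal : ∀ s t, s ≠ t → m s t ≠ 1

namespace CoxeterMat

variable {S : Type*} (M : CoxeterMat S)

/-- The coefficient `⟨α_s, α_t⟩ = -2 cos (π / m_{s,t})`, with value `-2` when `m_{s,t} = ∞`. -/
noncomputable def c (s t : S) : ℝ :=
  if M.m s t = 0 then -2 else -2 * Real.cos (Real.pi / (M.m s t : ℝ))

/-- The simple root `α_s` in `V = ⊕_{s ∈ S} ℝ α_s`. -/
noncomputable def sroot (s : S) : S →₀ ℝ := Finsupp.single s 1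

/-- The canonical bilinear form of the Coxeter graph. -/
noncomputable def bform : (S →₀ ℝ) →ₗ[ℝ] (S →₀ ℝ) →ₗ[ℝ] ℝ :=
  Finsupp.lift _ ℝ S fun s => Finsupp.lift ℝ ℝ S fun t => M.c s t

/-- The simple reflection `σ_s : x ↦ x - ⟨α_s, x⟩ α_s`. -/
noncomputable def sigma (s : S) : (S →₀ ℝ) →ₗ[ℝ] (S →₀ ℝ) :=
  LinearMap.id - (M.bform (sroot s)).smulRight (sroot s)

/-- The Coxeter group `W`, realized as the subgroup of linear automorphisms of `V`
generated by the simple reflections. -/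
noncomputable def Wgrp : Subgroup ((S →₀ ℝ) ≃ₗ[ℝ] (S →₀ ℝ)) :=
  Subgroup.closure {w | ∃ s : S, (w : (S →₀ ℝ) →ₗ[ℝ] (S →₀ ℝ)) = M.sigma s}

/-- The canonical root system `Φ = {w(α_s) | w ∈ W, s ∈ S}`. -/
def Phi : Set (S →₀ ℝ) := {b | ∃ w ∈ M.Wgrp, ∃ s : S, b = w (sroot s)}

/-- The set of positive roots. -/
def PhiPos : Set (S →₀ ℝ) := {b | b ∈ M.Phi ∧ ∀ s, 0 ≤ b s}

/-- The equivalence relation `≡` on `Φ` generated by `α ≡₁ β ⟺ ⟨α, β⟩ ∉ {0, 1, -1}`. -/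
def equivR : (S →₀ ℝ) → (S →₀ ℝ) → Prop :=
  Relation.EqvGen (fun a b => a ∈ M.Phi ∧ b ∈ M.Phi ∧ M.bform a b ∉ ({0, 1, -1} : Set ℝ))

/-- The underlying graph of the Coxeter graph: `s` and `t` are joined iff `m_{s,t} ≥ 3`
(including `m_{s,t} = ∞`). -/
def graph : SimpleGraph S where
  Adj s t := s ≠ t ∧ M.m s t ≠ 2
  symm := ⟨fun s t h => ⟨h.1.symm, by rw [M.symmetric]; exact h.2⟩⟩
  loopless := ⟨fun s h => h.1 rfl⟩

/-- The action of a permutation of `S` on `V`. -/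
noncomputable def permV (g : Equiv.Perm S) : (S →₀ ℝ) ≃ₗ[ℝ] (S →₀ ℝ) :=
  Finsupp.domLCongr g

/-- The set of elements of `W` fixed by the group `G` of symmetries (acting by conjugation
by the corresponding permutations of coordinates). -/
noncomputable def WfixG (G : Subgroup (Equiv.Perm S)) :
    Set ((S →₀ ℝ) ≃ₗ[ℝ] (S →₀ ℝ)) :=
  {w | w ∈ M.Wgrp ∧ ∀ g ∈ G, permV g * w = w * permV g}

/-- Construct a simply laced Coxeter matrix from an adjacency relation. -/
noncomputable def ofAdj (A : S → S → Prop) (hs : ∀ s t, A s t → A t s)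
    (hi : ∀ s, ¬ A s s) : CoxeterMat S where
  m s t := open Classical in if s = t then 1 else if A s t then 3 else 2
  diagonal s := by simp
  symmetric s t := by
    classical
    by_cases h : s = t
    · subst h; rfl
    · have h' : t ≠ s := Ne.symm h
      simp only [if_neg h, if_neg h']
      by_cases hA : A s t
      · rw [if_pos hA, if_pos (hs s t hA)]
      · rw [if_neg hA, if_neg (fun h2 => hA (hs t s h2))]
  off_diagonal s t h := by
    classical
    simp only [if_neg h]
    split <;> norm_num

/-- Isomorphism of Coxeter graphs. -/
def Iso {T : Type*} (M : CoxeterMat S) (N : CoxeterMat T) : Prop :=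
  ∃ e : S ≃ T, ∀ s t, N.m (e s) (e t) = M.m s t

/-- The full Coxeter subgraph spanned by `Y ⊆ S`. -/
def restrict (Y : Set S) : CoxeterMat Y where
  m s t := M.m s t
  diagonal s := M.diagonal s
  symmetric s t := M.symmetric s t
  off_diagonal s t h := M.off_diagonal s t (fun hh => h (Subtype.ext hh))

end CoxeterMat

open CoxeterMat

/-- The Coxeter graph `A_n`: a path with `n` vertices. -/
noncomputable def pathA (n : ℕ) : CoxeterMat (Fin n) :=
  ofAdj (fun i j => i.val + 1 = j.val ∨ j.val + 1 = i.val)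
    (fun _ _ h => h.symm)
    (fun s h => by rcases h with h | h <;> omega)

/-- The Coxeter graph `D_n`: a path `0 — 1 — ⋯ — (n-2)` together with an extra vertex `n-1`
joined to `n-3`. -/
noncomputable def Dmat (n : ℕ) : CoxeterMat (Fin n) :=
  ofAdj (fun i j => i ≠ j ∧
      (((i.val + 1 = j.val ∧ j.val ≤ n - 2) ∨ (i.val + 2 = j.val ∧ j.val = n - 1)) ∨
       ((j.val + 1 = i.val ∧ i.val ≤ n - 2) ∨ (j.val + 2 = i.val ∧ i.val = n - 1))))
    (fun _ _ h => ⟨h.1.symm, h.2.symm⟩)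
    (fun s h => h.1 rfl)

/-- Adjacency relation determined by a list of edges. -/
def listAdj {n : ℕ} (L : List (Fin n × Fin n)) (i j : Fin n) : Prop :=
  (i, j) ∈ L ∨ (j, i) ∈ L

instance {n : ℕ} (L : List (Fin n × Fin n)) (i j : Fin n) : Decidable (listAdj L i j) := by
  unfold listAdj; infer_instance

/-- The Coxeter graph `E₆`. -/
noncomputable def E6mat : CoxeterMat (Fin 6) :=
  ofAdj (listAdj [(0,2),(2,3),(3,4),(4,5),(1,3)])
    (fun _ _ h => h.symm) (by decide)

/-- The Coxeter graph `E₇`. -/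
noncomputable def E7mat : CoxeterMat (Fin 7) :=
  ofAdj (listAdj [(0,2),(2,3),(3,4),(4,5),(5,6),(1,3)])
    (fun _ _ h => h.symm) (by decide)

/-- The Coxeter graph `E₈`. -/
noncomputable def E8mat : CoxeterMat (Fin 8) :=
  ofAdj (listAdj [(0,2),(2,3),(3,4),(4,5),(5,6),(6,7),(1,3)])
    (fun _ _ h => h.symm) (by decide)

/-- The Coxeter graph `A_∞`: the one-sided infinite path. -/
noncomputable def Ainf : CoxeterMat ℕ :=
  ofAdj (fun i j => i + 1 = j ∨ j + 1 = i)
    (fun _ _ h => h.symm)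
    (fun s h => by omega)

/-- The Coxeter graph `_∞A_∞`: the two-sided infinite path. -/
noncomputable def ZAinf : CoxeterMat ℤ :=
  ofAdj (fun i j => i + 1 = j ∨ j + 1 = i)
    (fun _ _ h => h.symm)
    (fun s h => by omega)

/-- The Coxeter graph `D_∞`: vertices `0, 1, 2, 3, …` with `0` and `1` joined to `2` and a
path `2 — 3 — 4 — ⋯`. -/
noncomputable def Dinf : CoxeterMat ℕ :=
  ofAdj (fun i j => i ≠ j ∧
      (((i = 0 ∧ j = 2) ∨ (i = 1 ∧ j = 2) ∨ (i + 1 = j ∧ 2 ≤ i)) ∨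
       ((j = 0 ∧ i = 2) ∨ (j = 1 ∧ i = 2) ∨ (j + 1 = i ∧ 2 ≤ j))))
    (fun _ _ h => ⟨h.1.symm, h.2.symm⟩)
    (fun s h => h.1 rfl)

/-- The affine Coxeter graph `Ã_n`: a cycle with `n + 1` vertices. -/
noncomputable def affA (n : ℕ) : CoxeterMat (ZMod (n + 1)) :=
  ofAdj (fun i j => i ≠ j ∧ (i + 1 = j ∨ j + 1 = i))
    (fun _ _ h => ⟨h.1.symm, h.2.symm⟩)
    (fun s h => h.1 rfl)

/-- The affine Coxeter graph `D̃_n` (on `n + 1` vertices, Bourbaki numbering): `0` and `1`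
joined to `2`, a path `2 — 3 — ⋯ — (n-1)`, and `n` joined to `n-2`. -/
noncomputable def affD (n : ℕ) : CoxeterMat (Fin (n + 1)) :=
  ofAdj (fun i j => i ≠ j ∧
      (((i.val = 0 ∧ j.val = 2) ∨ (i.val = 1 ∧ j.val = 2) ∨
        (i.val + 1 = j.val ∧ 2 ≤ i.val ∧ i.val ≤ n - 2) ∨
        (i.val = n - 2 ∧ j.val = n)) ∨
       ((j.val = 0 ∧ i.val = 2) ∨ (j.val = 1 ∧ i.val = 2) ∨
        (j.val + 1 = i.val ∧ 2 ≤ j.val ∧ j.val ≤ n - 2) ∨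
        (j.val = n - 2 ∧ i.val = n))))
    (fun _ _ h => ⟨h.1.symm, h.2.symm⟩)
    (fun s h => h.1 rfl)

/-- The affine Coxeter graph `Ẽ₆` (Bourbaki numbering, affine vertex `0`). -/
noncomputable def affE6 : CoxeterMat (Fin 7) :=
  ofAdj (listAdj [(1,3),(3,4),(4,5),(5,6),(2,4),(0,2)])
    (fun _ _ h => h.symm) (by decide)

/-- The affine Coxeter graph `Ẽ₇` (Bourbaki numbering, affine vertex `0`). -/
noncomputable def affE7 : CoxeterMat (Fin 8) :=
  ofAdj (listAdj [(0,1),(1,3),(3,4),(4,5),(5,6),(6,7),(2,4)])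
    (fun _ _ h => h.symm) (by decide)

/-- The affine Coxeter graph `Ẽ₈` (Bourbaki numbering, affine vertex `0`). -/
noncomputable def affE8 : CoxeterMat (Fin 9) :=
  ofAdj (listAdj [(1,3),(3,4),(4,5),(5,6),(6,7),(7,8),(2,4),(0,8)])
    (fun _ _ h => h.symm) (by decide)

theorem Relation.EqvGen.map {α β : Type*} {r : α → α → Prop} {p : β → β → Prop} (f : α → β)
    (hf : ∀ x y, r x y → p (f x) (f y)) {x y : α} (h : Relation.EqvGen r x y) :
    Relation.EqvGen p (f x) (f y) := by
  induction h with
  | rel x y hxy => exact .rel _ _ (hf x y hxy)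
  | refl x => exact .refl _
  | symm x y _ ih => exact ih.symm
  | trans x y z _ _ ihxy ihyz => exact ihxy.trans _ _ _ ihyz

namespace CoxeterMat

variable {S : Type*} (M : CoxeterMat S)

lemma c_comm (s t : S) : M.c s t = M.c t s := by
  rw [c, c, M.symmetric]

lemma c_self (s : S) : M.c s s = 2 := by
  simp [c, M.diagonal s]

lemma bform_sroot_sroot (s t : S) : M.bform (sroot s) (sroot t) = M.c s t := by
  simp [bform, sroot]

lemma bform_comm (x y : S →₀ ℝ) : M.bform x y = M.bform y x := by
  induction x using Finsupp.induction_linear with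
  | zero => simp
  | add u v hu hv => simp [hu, hv]
  | single s r =>
    induction y using Finsupp.induction_linear with
    | zero => simp
    | add u v hu hv => simp [hu, hv]
    | single t r' => simp [bform, M.c_comm s t, mul_left_comm]

lemma bform_sub_smul_sub_smul {v : S →₀ ℝ} (hv : M.bform v v = 2) (x y : S →₀ ℝ) :
    M.bform (x - M.bform v x • v) (y - M.bform v y • v) = M.bform x y := by
  simp only [map_sub, map_smul, LinearMap.sub_apply, LinearMap.smul_apply, smul_eq_mul, hv,
    M.bform_comm x v]
  ring

lemma sub_smul_sub_smul {v : S →₀ ℝ} (hv : M.bform v v = 2) (x : S →₀ ℝ) :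
    (x - M.bform v x • v) - M.bform v (x - M.bform v x • v) • v = x := by
  simp only [map_sub, map_smul, smul_eq_mul, hv]
  module

lemma sigma_apply (s : S) (x : S →₀ ℝ) :
    M.sigma s x = x - M.bform (sroot s) x • sroot s := by
  simp [sigma]

lemma bform_sroot_self (s : S) : M.bform (sroot s) (sroot s) = 2 := by
  rw [bform_sroot_sroot, c_self]

lemma sigma_involutive (s : S) : Function.Involutive (M.sigma s) := fun x => by
  simp only [sigma_apply, M.sub_smul_sub_smul (M.bform_sroot_self s)]

noncomputable def sigmaEquiv (s : S) : (S →₀ ℝ) ≃ₗ[ℝ] (S →₀ ℝ) :=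
  LinearEquiv.ofInvolutive (M.sigma s) (M.sigma_involutive s)

lemma sigmaEquiv_mem_Wgrp (s : S) : M.sigmaEquiv s ∈ M.Wgrp :=
  Subgroup.subset_closure ⟨s, rfl⟩

lemma bform_apply_apply_of_mem_Wgrp {w : (S →₀ ℝ) ≃ₗ[ℝ] (S →₀ ℝ)} (hw : w ∈ M.Wgrp)
    (x y : S →₀ ℝ) : M.bform (w x) (w y) = M.bform x y := by
  induction hw using Subgroup.closure_induction generalizing x y with
  | mem w hw =>
    obtain ⟨s, hs⟩ := hw
    simp only [← LinearEquiv.coe_coe, hs, sigma_apply]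
    exact M.bform_sub_smul_sub_smul (M.bform_sroot_self s) x y
  | one => rfl
  | mul u v _ _ ihu ihv => exact (ihu _ _).trans (ihv x y)
  | inv u _ ihu => rw [← ihu, LinearEquiv.coe_inv, u.apply_symm_apply, u.apply_symm_apply]

lemma apply_mem_Phi_of_mem_Wgrp {w : (S →₀ ℝ) ≃ₗ[ℝ] (S →₀ ℝ)} (hw : w ∈ M.Wgrp)
    {x : S →₀ ℝ} (hx : x ∈ M.Phi) : w x ∈ M.Phi := by
  obtain ⟨w', hw', s, rfl⟩ := hx
  exact ⟨w * w', mul_mem hw hw', s, rfl⟩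

lemma bform_self_of_mem_Phi {a : S →₀ ℝ} (ha : a ∈ M.Phi) : M.bform a a = 2 := by
  obtain ⟨w, hw, s, rfl⟩ := ha
  rw [M.bform_apply_apply_of_mem_Wgrp hw, bform_sroot_self]

/-- For `a = w α_s`, the reflection `r_a` is `w σ_s w⁻¹`. -/
lemma exists_mem_Wgrp_apply_eq_reflection {a : S →₀ ℝ} (ha : a ∈ M.Phi) :
    ∃ u ∈ M.Wgrp, ∀ x, u x = x - M.bform a x • a := by
  obtain ⟨w, hw, s, rfl⟩ := ha
  refine ⟨w * M.sigmaEquiv s * w⁻¹,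
    mul_mem (mul_mem hw (M.sigmaEquiv_mem_Wgrp s)) (inv_mem hw), fun x => ?_⟩
  have hx : w (w.symm x) = x := w.apply_symm_apply x
  calc (w * M.sigmaEquiv s * w⁻¹) x = w (M.sigma s (w.symm x)) := rfl
    _ = x - M.bform (w (sroot s)) x • w (sroot s) := by
      rw [sigma_apply, map_sub, map_smul, hx, ← M.bform_apply_apply_of_mem_Wgrp hw, hx]

lemma equivR_apply_of_mem_Wgrp {w : (S →₀ ℝ) ≃ₗ[ℝ] (S →₀ ℝ)} (hw : w ∈ M.Wgrp)
    {x y : S →₀ ℝ} (h : M.equivR x y) : M.equivR (w x) (w y) :=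
  h.map w fun x y ⟨hx, hy, hxy⟩ => ⟨M.apply_mem_Phi_of_mem_Wgrp hw hx,
    M.apply_mem_Phi_of_mem_Wgrp hw hy, by rwa [M.bform_apply_apply_of_mem_Wgrp hw]⟩

lemma equivR_neg_self {a : S →₀ ℝ} (ha : a ∈ M.Phi) : M.equivR a (-a) := by
  obtain ⟨u, hu, hu_apply⟩ := M.exists_mem_Wgrp_apply_eq_reflection ha
  have hua : u a = -a := by rw [hu_apply, M.bform_self_of_mem_Phi ha]; module
  refine .rel _ _ ⟨ha, hua ▸ M.apply_mem_Phi_of_mem_Wgrp hu ha, ?_⟩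
  rw [map_neg, M.bform_self_of_mem_Phi ha]
  norm_num

end CoxeterMat

theorem stmt4_general {S : Type*} (M : CoxeterMat S) (a b : S →₀ ℝ)
    (ha : a ∈ M.Phi) (h : M.equivR a b) :
    M.equivR a (b - M.bform a b • a) ∧ M.equivR b (b - M.bform a b • a) := by
  obtain ⟨u, hu, hu_apply⟩ := M.exists_mem_Wgrp_apply_eq_reflection ha
  have hua : u a = -a := by rw [hu_apply, M.bform_self_of_mem_Phi ha]; module
  have h_neg : M.equivR (-a) (b - M.bform a b • a) := by
    rw [← hua, ← hu_apply]
    exact M.equivR_apply_of_mem_Wgrp hu h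
  have h_refl : M.equivR a (b - M.bform a b • a) := (M.equivR_neg_self ha).trans _ _ _ h_neg
  exact ⟨h_refl, h.symm.trans _ _ _ h_refl⟩

/-- If `α ≡ β` in the canonical root system, then `α ≡ r_α(β)` and `β ≡ r_α(β)`, where
`r_α(x) = x - ⟨α, x⟩ α` and `≡` is the equivalence relation generated by
`⟨α, β⟩ ∉ {0, 1, -1}`. -/
theorem stmt4 {S : Type*} (M : CoxeterMat S) (a b : S →₀ ℝ)
    (ha : a ∈ M.Phi) (hb : b ∈ M.Phi) (h : M.equivR a b) :
    M.equivR a (b - M.bform a b • a) ∧ M.equivR b (b - M.bform a b • a) :=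
  stmt4_general M a b ha h
end

section
/- Let V be a real vector space, x, x', y ∈ V, and w, w' ∈ GL(V) such that w(x) = x' + y, w'(x') = x + y, and w(y) = w'(y) = y. Then for all k ∈ ℤ: (w'w)ᵏ(x) = x + 2k·y, w(w'w)ᵏ(x) = x' + (2k+1)·y, (ww')ᵏ(x') = x' + 2k·y, and w'(ww')ᵏ(x') = x + (2k+1)·y. -/
/-! The product `w' * w` fixes `y` and sends `x` to `x + 2 • y`, so it acts on the affine line
`x + ℤ • y` as a translation by `2 • y`; its integer powers are translations by multiples of
`2 • y`, and one further application of `w` trades `x` for `x' + y`. The statements about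
`w * w'` and `x'` are the same with the roles of `(w, x)` and `(w', x')` exchanged. -/

namespace LinearEquiv

variable {R V : Type*} [Semiring R] [AddCommGroup V] [Module R V]

theorem zpow_apply_eq_add_zsmul (g : V ≃ₗ[R] V) {x z : V} (hx : g x = x + z) (hz : g z = z)
    (k : ℤ) : (g ^ k) x = x + k • z := by
  have step (m : ℤ) : g (x + m • z) = x + (m + 1) • z := by
    rw [map_add, map_zsmul, hx, hz, add_zsmul, one_zsmul]
    abel
  induction k using Int.induction_on with
  | zero => simp
  | succ n ih => rw [zpow_add_one, ← (Commute.self_zpow g n).eq, mul_apply, ih, step]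
  | pred n ih =>
    apply g.injective
    rw [← mul_apply, ← zpow_one_add, add_sub_cancel, ih, step, sub_add_cancel]

theorem zpow_mul_apply_of_exchange (w w' : V ≃ₗ[R] V) {x x' y : V} (hx : w x = x' + y)
    (hx' : w' x' = x + y) (hy : w y = y) (hy' : w' y = y) (k : ℤ) :
    ((w' * w) ^ k) x = x + (2 * k) • y ∧ (w * (w' * w) ^ k) x = x' + (2 * k + 1) • y := by
  have hx₂ : (w' * w) x = x + (2 : ℤ) • y := by
    rw [mul_apply, hx, map_add, hx', hy', two_zsmul, add_assoc]
  have hy₂ : (w' * w) ((2 : ℤ) • y) = (2 : ℤ) • y := by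
    rw [mul_apply, map_zsmul, map_zsmul, hy, hy']
  have hpow : ((w' * w) ^ k) x = x + (2 * k) • y := by
    rw [zpow_apply_eq_add_zsmul _ hx₂ hy₂, smul_smul, mul_comm]
  refine ⟨hpow, ?_⟩
  rw [mul_apply, hpow, map_add, map_zsmul, hx, hy, add_zsmul, one_zsmul]
  abel

end LinearEquiv

/-- If `w, w'` are invertible linear maps of a real vector space `V` with `w(x) = x' + y`,
`w'(x') = x + y` and `w(y) = w'(y) = y`, then for all integers `k`:
`(w'w)ᵏ(x) = x + 2k•y`, `w(w'w)ᵏ(x) = x' + (2k+1)•y`, `(ww')ᵏ(x') = x' + 2k•y` and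
`w'(ww')ᵏ(x') = x + (2k+1)•y`. -/
theorem stmt11 {V : Type*} [AddCommGroup V] [Module ℝ V] (w w' : V ≃ₗ[ℝ] V)
    (x x' y : V) (hx : w x = x' + y) (hx' : w' x' = x + y) (hy : w y = y)
    (hy' : w' y = y) (k : ℤ) :
    ((w' * w) ^ k) x = x + (2 * k) • y ∧
    (w * (w' * w) ^ k) x = x' + (2 * k + 1) • y ∧
    ((w * w') ^ k) x' = x' + (2 * k) • y ∧
    (w' * (w * w') ^ k) x' = x + (2 * k + 1) • y :=
  let ⟨hpow, happly⟩ := LinearEquiv.zpow_mul_apply_of_exchange w w' hx hx' hy hy' k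
  let ⟨hpow', happly'⟩ := LinearEquiv.zpow_mul_apply_of_exchange w' w hx' hx hy' hy k
  ⟨hpow, happly, hpow', happly'⟩
end

section
/- Let W be the Coxeter group of type A_{2m+1} (m ≥ 1) with generators s_1,…,s_{2m+1}, acting on its canonical root system Φ, and let g be the diagram automorphism with g(s_i) = s_{2m+2-i}. Let W^g be the subgroup of W fixed by g. Then every root in Φ lies in the W^g-orbit of α_m or of α_{m+1}, i.e., Φ = W^g·α_m ∪ W^g·α_{m+1}. -/
open Real

open CoxeterMat

/-! The roots of `A_{2m+1}` are the interval sums `±(α_i + ⋯ + α_j)`, `i ≤ j`, and a simple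
reflection moves one end of such an interval by one step, negates it, or fixes it. Using `s_{m+1}`
and `u_{X_k} = s_k s_{2m+2-k}` in `W^g`: the `g`-stable intervals (`i + j = 2m + 2`) are obtained from
`α_{m+1}` by widening on both sides; those with `i + j < 2m + 2` from `α_m` by moving one end at a
time; those with `i + j > 2m + 2` are their images under `g`, which commutes with `W^g` and maps
`α_m` to `α_{m+2} ∈ W^g α_m`. Finally `s_{m+1} α_{m+1} = -α_{m+1}` and `u_{X_m} α_m = -α_m` give
the negative roots. -/

namespace CoxeterMat

variable {S : Type*} (M : CoxeterMat S)

lemma bform_sroot_apply [Fintype S] (s : S) (x : S →₀ ℝ) :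
    M.bform (sroot s) x = ∑ t, x t * M.c s t := by
  rw [bform, sroot, Finsupp.lift_apply, Finsupp.sum_single_index (by simp), one_smul,
    Finsupp.lift_apply, Finsupp.sum_fintype _ _ (by simp)]
  simp [mul_comm]

lemma sigma_sroot (s : S) : M.sigma s (sroot s) = -sroot s := by
  rw [sigma_apply, bform_sroot_sroot, c_self]
  module

lemma sigma_sigma_comm {s t : S} (h : M.c s t = 0) (x : S →₀ ℝ) :
    M.sigma s (M.sigma t x) = M.sigma t (M.sigma s x) := by
  have h' : M.c t s = 0 := by rw [c_comm, h]
  simp only [sigma_apply, map_sub, map_smul, bform_sroot_sroot, h, h', zero_smul, sub_zero]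
  module

lemma mapsTo_of_mem_Wgrp {X : Set (S →₀ ℝ)} (hX : ∀ s, Set.MapsTo (M.sigma s) X X)
    {w : (S →₀ ℝ) ≃ₗ[ℝ] (S →₀ ℝ)} (hw : w ∈ M.Wgrp) : Set.MapsTo w X X := by
  have hgen : ∀ u : (S →₀ ℝ) ≃ₗ[ℝ] (S →₀ ℝ), (∃ s, (u : (S →₀ ℝ) →ₗ[ℝ] (S →₀ ℝ)) = M.sigma s) →
      ∃ s, ⇑u = M.sigma s ∧ ⇑u⁻¹ = M.sigma s := by
    rintro u ⟨s, hs⟩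
    have hu : ⇑u = M.sigma s := by rw [← LinearEquiv.coe_coe, hs]
    refine ⟨s, hu, funext fun x => u.injective ?_⟩
    change u (u.symm x) = u (M.sigma s x)
    rw [u.apply_symm_apply, hu, M.sigma_involutive s x]
  induction hw using Subgroup.closure_induction'' with
  | mem u hu => obtain ⟨s, h, -⟩ := hgen u hu; rw [h]; exact hX s
  | inv_mem u hu => obtain ⟨s, -, h⟩ := hgen u hu; rw [h]; exact hX s
  | one => exact Set.mapsTo_id X
  | mul u v _ _ hu hv => exact hu.comp hv

noncomputable def permVHom : Equiv.Perm S →* (S →₀ ℝ) ≃ₗ[ℝ] (S →₀ ℝ) where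
  toFun := permV
  map_one' := Finsupp.domLCongr_refl
  map_mul' g h := (Finsupp.domLCongr_trans h g).symm

@[simp]
lemma permVHom_apply (g : Equiv.Perm S) : permVHom g = permV g := rfl

lemma permV_sroot (g : Equiv.Perm S) (s : S) : permV g (sroot s) = sroot (g s) :=
  Finsupp.domLCongr_single g s 1

noncomputable def fixSubgroup (G : Subgroup (Equiv.Perm S)) :
    Subgroup ((S →₀ ℝ) ≃ₗ[ℝ] (S →₀ ℝ)) :=
  M.Wgrp ⊓ Subgroup.centralizer (G.map permVHom)

lemma coe_fixSubgroup (G : Subgroup (Equiv.Perm S)) : (M.fixSubgroup G : Set _) = M.WfixG G := by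
  ext w
  simp [fixSubgroup, WfixG, Subgroup.mem_centralizer_iff]

lemma mem_fixSubgroup_closure_singleton {g : Equiv.Perm S} {w : (S →₀ ℝ) ≃ₗ[ℝ] (S →₀ ℝ)} :
    w ∈ M.fixSubgroup (Subgroup.closure {g}) ↔ w ∈ M.Wgrp ∧ Commute (permV g) w := by
  rw [fixSubgroup, Subgroup.mem_inf, MonoidHom.map_closure, Set.image_singleton,
    Subgroup.centralizer_closure, Subgroup.mem_centralizer_singleton_iff, permVHom_apply,
    commute_iff_eq, eq_comm]

section Automorphism

variable {M} {g : Equiv.Perm S}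

lemma c_perm (hg : ∀ s t, M.m (g s) (g t) = M.m s t) (s t : S) : M.c (g s) (g t) = M.c s t := by
  rw [c, c, hg]

lemma bform_sroot_permV (hg : ∀ s t, M.m (g s) (g t) = M.m s t) (s : S) (x : S →₀ ℝ) :
    M.bform (sroot (g s)) (permV g x) = M.bform (sroot s) x := by
  induction x using Finsupp.induction_linear with
  | zero => simp
  | add x y hx hy => simp only [map_add, hx, hy]
  | single t a =>
    rw [show Finsupp.single t a = a • sroot t by simp [sroot], map_smul, map_smul, map_smul,
      permV_sroot, bform_sroot_sroot, bform_sroot_sroot, c_perm hg]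

lemma permV_sigma (hg : ∀ s t, M.m (g s) (g t) = M.m s t) (s : S) (x : S →₀ ℝ) :
    permV g (M.sigma s x) = M.sigma (g s) (permV g x) := by
  rw [sigma_apply, sigma_apply, map_sub, map_smul, permV_sroot, bform_sroot_permV hg]

lemma permV_mul_sigmaEquiv (hg : ∀ s t, M.m (g s) (g t) = M.m s t) (s : S) :
    permV g * M.sigmaEquiv s = M.sigmaEquiv (g s) * permV g :=
  LinearEquiv.ext fun x => permV_sigma hg s x

lemma sigmaEquiv_mem_fixSubgroup (hg : ∀ s t, M.m (g s) (g t) = M.m s t) {s : S} (hs : g s = s) :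
    M.sigmaEquiv s ∈ M.fixSubgroup (Subgroup.closure {g}) := by
  refine M.mem_fixSubgroup_closure_singleton.2 ⟨M.sigmaEquiv_mem_Wgrp s, ?_⟩
  rw [commute_iff_eq, permV_mul_sigmaEquiv hg, hs]

/-- The element `u_X` of the paper for the orbit `X = {s, g s}` of an involutive symmetry. -/
lemma sigmaEquiv_mul_sigmaEquiv_mem_fixSubgroup (hg : ∀ s t, M.m (g s) (g t) = M.m s t) {s : S}
    (hs : g (g s) = s) (hc : M.c s (g s) = 0) :
    M.sigmaEquiv s * M.sigmaEquiv (g s) ∈ M.fixSubgroup (Subgroup.closure {g}) := by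
  refine M.mem_fixSubgroup_closure_singleton.2
    ⟨mul_mem (M.sigmaEquiv_mem_Wgrp s) (M.sigmaEquiv_mem_Wgrp _), ?_⟩
  have hcomm : Commute (M.sigmaEquiv s) (M.sigmaEquiv (g s)) :=
    LinearEquiv.ext fun x => M.sigma_sigma_comm hc x
  rw [commute_iff_eq, ← mul_assoc, permV_mul_sigmaEquiv hg, mul_assoc, permV_mul_sigmaEquiv hg, hs,
    ← mul_assoc, hcomm.eq, mul_assoc]

end Automorphism

lemma setOf_eq_orbit_fixSubgroup (G : Subgroup (Equiv.Perm S)) (a : S →₀ ℝ) :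
    {x | ∃ w ∈ M.WfixG G, x = w a} = MulAction.orbit (M.fixSubgroup G) a := by
  ext x
  rw [← coe_fixSubgroup]
  constructor
  · rintro ⟨w, hw, rfl⟩
    exact ⟨⟨w, hw⟩, rfl⟩
  · rintro ⟨w, rfl⟩
    exact ⟨w, w.2, rfl⟩

lemma orbit_fixSubgroup_subset_Phi (G : Subgroup (Equiv.Perm S)) (s : S) :
    MulAction.orbit (M.fixSubgroup G) (sroot s) ⊆ M.Phi := by
  rintro _ ⟨w, rfl⟩
  exact ⟨w, w.2.1, s, rfl⟩

lemma permV_mem_orbit_fixSubgroup {G : Subgroup (Equiv.Perm S)} {g : Equiv.Perm S} (hg : g ∈ G)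
    {a x : S →₀ ℝ} (hx : x ∈ MulAction.orbit (M.fixSubgroup G) a) :
    permV g x ∈ MulAction.orbit (M.fixSubgroup G) (permV g a) := by
  obtain ⟨w, rfl⟩ := hx
  refine ⟨w, ?_⟩
  have hw := Subgroup.mem_centralizer_iff.1 w.2.2 (permVHom g) (Subgroup.mem_map_of_mem _ hg)
  exact (LinearEquiv.congr_fun hw a).symm

end CoxeterMat

lemma MulAction.neg_mem_orbit_of_neg_mem {R V : Type*} [Ring R] [AddCommGroup V] [Module R V]
    {H : Subgroup (V ≃ₗ[R] V)} {a x : V} (ha : -a ∈ orbit H a) (hx : x ∈ orbit H a) :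
    -x ∈ orbit H a := by
  obtain ⟨w, rfl⟩ := hx
  have h := mem_orbit_of_mem_orbit w ha
  rwa [Subgroup.smul_def, LinearEquiv.smul_def, map_neg] at h

lemma Fin.sum_univ_ite_val_eq {n : ℕ} {M : Type*} [AddCommMonoid M] (a : ℕ) (v : M) :
    ∑ k : Fin n, (if k.val = a then v else 0) = if a < n then v else 0 := by
  rw [Fin.sum_univ_eq_sum_range (fun k => if k = a then v else 0)]
  simp [Finset.mem_range]

section TypeA

open CoxeterMat

variable {n : ℕ}

lemma pathA_c (s t : Fin n) :
    (pathA n).c s t =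
      if s = t then 2 else if s.val + 1 = t.val ∨ t.val + 1 = s.val then -1 else 0 := by
  split_ifs with hst hadj
  · rw [hst, c_self]
  · simp [c, pathA, ofAdj, hst, hadj, Real.cos_pi_div_three]
  · simp [c, pathA, ofAdj, hst, hadj, Real.cos_pi_div_two]

/-- Zero when `i > j`; for `i ≤ j < n`, these and their negatives are the roots of `A_n`. -/
noncomputable def intervalRoot (i j : ℕ) : Fin n →₀ ℝ :=
  Finsupp.equivFunOnFinite.symm fun k => if i ≤ k.val ∧ k.val ≤ j then 1 else 0

lemma intervalRoot_apply (i j : ℕ) (k : Fin n) :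
    intervalRoot i j k = if i ≤ k.val ∧ k.val ≤ j then 1 else 0 := rfl

lemma intervalRoot_self (t : Fin n) : intervalRoot t.val t.val = sroot t := by
  ext k
  simp only [intervalRoot_apply, sroot, Finsupp.single_apply, Fin.ext_iff]
  split_ifs <;> first | rfl | (exfalso; omega)

lemma bform_sroot_intervalRoot (t : Fin n) {i j : ℕ} (hj : j < n) :
    (pathA n).bform (sroot t) (intervalRoot i j) =
      (if i + 1 ≤ t.val ∧ t.val ≤ j + 1 then -1 else 0) + (if i ≤ t.val ∧ t.val ≤ j then 2 else 0) +
        (if i ≤ t.val + 1 ∧ t.val + 1 ≤ j then -1 else 0) := by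
  have ht := t.isLt
  have hterm : ∀ k : Fin n, intervalRoot i j k * (pathA n).c t k =
      (if k.val = t.val - 1 then (if i + 1 ≤ t.val ∧ t.val ≤ j + 1 then (-1 : ℝ) else 0) else 0) +
      (if k.val = t.val then (if i ≤ t.val ∧ t.val ≤ j then 2 else 0) else 0) +
      (if k.val = t.val + 1 then (if i ≤ t.val + 1 ∧ t.val + 1 ≤ j then -1 else 0) else 0) := by
    intro k
    rw [intervalRoot_apply, pathA_c]
    simp only [Fin.ext_iff]
    split_ifs <;> first | omega | norm_num
  simp only [bform_sroot_apply, hterm, Finset.sum_add_distrib, Fin.sum_univ_ite_val_eq]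
  split_ifs <;> first | omega | norm_num

lemma sigma_intervalRoot_apply (t : Fin n) {i j : ℕ} (hj : j < n) (k : Fin n) :
    (pathA n).sigma t (intervalRoot i j) k = intervalRoot i j k -
      ((if i + 1 ≤ t.val ∧ t.val ≤ j + 1 then -1 else 0) + (if i ≤ t.val ∧ t.val ≤ j then 2 else 0) +
        (if i ≤ t.val + 1 ∧ t.val + 1 ≤ j then -1 else 0)) * (if t = k then 1 else 0) := by
  rw [sigma_apply, Finsupp.sub_apply, Finsupp.smul_apply, bform_sroot_intervalRoot t hj, sroot,
    Finsupp.single_apply, smul_eq_mul]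

lemma sigma_intervalRoot_of_far (t : Fin n) {i j : ℕ} (hj : j < n)
    (ht : t.val + 2 ≤ i ∨ (i + 1 ≤ t.val ∧ t.val + 1 ≤ j) ∨ j + 2 ≤ t.val) :
    (pathA n).sigma t (intervalRoot i j) = intervalRoot i j := by
  ext k
  rw [sigma_intervalRoot_apply t hj]
  split_ifs <;> first | omega | norm_num

lemma sigma_intervalRoot_extend_right (t : Fin n) {i j : ℕ} (hij : i ≤ j) (ht : t.val = j + 1) :
    (pathA n).sigma t (intervalRoot i j) = intervalRoot i (j + 1) := by
  ext k
  rw [sigma_intervalRoot_apply t (by omega)]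
  simp only [intervalRoot_apply, Fin.ext_iff]
  split_ifs <;> first | omega | norm_num

lemma sigma_intervalRoot_extend_left (t : Fin n) {i j : ℕ} (hij : i ≤ j) (hj : j < n)
    (ht : t.val + 1 = i) :
    (pathA n).sigma t (intervalRoot i j) = intervalRoot t.val j := by
  ext k
  rw [sigma_intervalRoot_apply t hj]
  simp only [intervalRoot_apply, Fin.ext_iff]
  split_ifs <;> first | omega | norm_num

lemma sigma_intervalRoot_shrink_left (t : Fin n) {i j : ℕ} (hij : i < j) (hj : j < n)
    (ht : t.val = i) :
    (pathA n).sigma t (intervalRoot i j) = intervalRoot (i + 1) j := by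
  ext k
  rw [sigma_intervalRoot_apply t hj]
  simp only [intervalRoot_apply, Fin.ext_iff]
  split_ifs <;> first | omega | norm_num

lemma sigma_intervalRoot_shrink_right (t : Fin n) {i j : ℕ} (hij : i < j) (ht : t.val = j) :
    (pathA n).sigma t (intervalRoot i j) = intervalRoot i (j - 1) := by
  ext k
  rw [sigma_intervalRoot_apply t (by omega)]
  simp only [intervalRoot_apply, Fin.ext_iff]
  split_ifs <;> first | omega | norm_num

lemma sigma_intervalRoot_self (t : Fin n) {i : ℕ} (ht : t.val = i) :
    (pathA n).sigma t (intervalRoot i i) = -intervalRoot i i := by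
  subst ht
  rw [intervalRoot_self, sigma_sroot]

def intervalRoots (n : ℕ) : Set (Fin n →₀ ℝ) :=
  {x | ∃ i j, i ≤ j ∧ j < n ∧ (x = intervalRoot i j ∨ x = -intervalRoot i j)}

lemma neg_mem_intervalRoots {x : Fin n →₀ ℝ} (hx : x ∈ intervalRoots n) :
    -x ∈ intervalRoots n := by
  obtain ⟨i, j, hij, hj, rfl | rfl⟩ := hx
  exacts [⟨i, j, hij, hj, .inr rfl⟩, ⟨i, j, hij, hj, .inl (neg_neg _)⟩]

lemma sigma_intervalRoot_mem_intervalRoots (t : Fin n) {i j : ℕ} (hij : i ≤ j) (hj : j < n) :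
    (pathA n).sigma t (intervalRoot i j) ∈ intervalRoots n := by
  have ht := t.isLt
  by_cases hl : t.val + 1 = i
  · exact ⟨t, j, by omega, hj, .inl (sigma_intervalRoot_extend_left t hij hj hl)⟩
  by_cases hr : t.val = j + 1
  · exact ⟨i, j + 1, by omega, by omega, .inl (sigma_intervalRoot_extend_right t hij hr)⟩
  by_cases hs : t.val = i ∧ i = j
  · obtain ⟨rfl, rfl⟩ := hs
    exact ⟨t, t, le_rfl, ht, .inr (sigma_intervalRoot_self t rfl)⟩
  by_cases hsl : t.val = i ∧ i < j
  · exact ⟨i + 1, j, by omega, hj, .inl (sigma_intervalRoot_shrink_left t hsl.2 hj hsl.1)⟩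
  by_cases hsr : t.val = j ∧ i < j
  · exact ⟨i, j - 1, by omega, by omega, .inl (sigma_intervalRoot_shrink_right t hsr.2 hsr.1)⟩
  exact ⟨i, j, hij, hj, .inl (sigma_intervalRoot_of_far t hj (by omega))⟩

lemma sigma_mapsTo_intervalRoots (t : Fin n) :
    Set.MapsTo ((pathA n).sigma t) (intervalRoots n) (intervalRoots n) := by
  rintro _ ⟨i, j, hij, hj, rfl | rfl⟩
  · exact sigma_intervalRoot_mem_intervalRoots t hij hj
  · rw [map_neg]
    exact neg_mem_intervalRoots (sigma_intervalRoot_mem_intervalRoots t hij hj)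

lemma Phi_pathA_subset_intervalRoots : (pathA n).Phi ⊆ intervalRoots n := by
  rintro _ ⟨w, hw, t, rfl⟩
  refine (pathA n).mapsTo_of_mem_Wgrp sigma_mapsTo_intervalRoots hw ?_
  exact ⟨t, t, le_rfl, t.isLt, .inl (intervalRoot_self t).symm⟩

lemma pathA_m_revPerm (s t : Fin n) :
    (pathA n).m (Fin.revPerm s) (Fin.revPerm t) = (pathA n).m s t := by
  have hs := s.isLt
  have ht := t.isLt
  simp only [pathA, ofAdj, Fin.revPerm_apply, Fin.rev_inj, Fin.val_rev]
  congr 2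
  apply propext
  omega

lemma permV_revPerm_intervalRoot {i j : ℕ} (hij : i ≤ j) (hj : j < n) :
    permV Fin.revPerm (intervalRoot i j : Fin n →₀ ℝ) = intervalRoot (n - 1 - j) (n - 1 - i) := by
  ext k
  have hk := k.isLt
  simp only [permV, Finsupp.domLCongr_apply, Finsupp.domCongr_apply, Finsupp.equivMapDomain_apply,
    Fin.revPerm_symm, Fin.revPerm_apply, intervalRoot_apply, Fin.val_rev]
  split_ifs <;> first | rfl | omega

end TypeA

section Folding

open CoxeterMat MulAction

def midVertex (m : ℕ) : Fin (2 * m + 1) :=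
  ⟨m, Nat.lt_succ_of_le (Nat.le_mul_of_pos_left m two_pos)⟩

variable {m : ℕ}

noncomputable abbrev revFixSubgroup (m : ℕ) :
    Subgroup ((Fin (2 * m + 1) →₀ ℝ) ≃ₗ[ℝ] (Fin (2 * m + 1) →₀ ℝ)) :=
  (pathA (2 * m + 1)).fixSubgroup (Subgroup.closure {Fin.revPerm})

noncomputable abbrev revFixOrbit (m c : ℕ) : Set (Fin (2 * m + 1) →₀ ℝ) :=
  orbit (revFixSubgroup m) (intervalRoot c c)

lemma sigmaEquiv_midVertex_mem_revFixSubgroup :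
    (pathA (2 * m + 1)).sigmaEquiv (midVertex m) ∈ revFixSubgroup m :=
  sigmaEquiv_mem_fixSubgroup pathA_m_revPerm
    (Fin.ext (by simp only [Fin.revPerm_apply, Fin.val_rev, midVertex]; omega))

lemma sigmaEquiv_mul_sigmaEquiv_mem_revFixSubgroup {k : ℕ} (hk : k < m) :
    (pathA (2 * m + 1)).sigmaEquiv ⟨k, by omega⟩ * (pathA (2 * m + 1)).sigmaEquiv ⟨2 * m - k, by omega⟩
      ∈ revFixSubgroup m := by
  have hrev : Fin.revPerm (⟨k, by omega⟩ : Fin (2 * m + 1)) = ⟨2 * m - k, by omega⟩ :=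
    Fin.ext (by simp only [Fin.revPerm_apply, Fin.val_rev]; omega)
  have hc : (pathA (2 * m + 1)).c ⟨k, by omega⟩ ⟨2 * m - k, by omega⟩ = 0 := by
    rw [pathA_c]
    simp only [Fin.ext_iff]
    split_ifs <;> first | rfl | omega
  have h := sigmaEquiv_mul_sigmaEquiv_mem_fixSubgroup pathA_m_revPerm
    (s := (⟨k, by omega⟩ : Fin (2 * m + 1))) (by simp) (by rwa [hrev])
  rwa [hrev] at h

variable {a x : Fin (2 * m + 1) →₀ ℝ}

lemma sigma_midVertex_mem_orbit (hx : x ∈ orbit (revFixSubgroup m) a) :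
    (pathA (2 * m + 1)).sigma (midVertex m) x ∈ orbit (revFixSubgroup m) a :=
  mem_orbit_of_mem_orbit ⟨_, sigmaEquiv_midVertex_mem_revFixSubgroup⟩ hx

lemma sigma_pair_mem_orbit {k : ℕ} (hk : k < m) (hx : x ∈ orbit (revFixSubgroup m) a) :
    (pathA (2 * m + 1)).sigma ⟨k, by omega⟩ ((pathA (2 * m + 1)).sigma ⟨2 * m - k, by omega⟩ x)
      ∈ orbit (revFixSubgroup m) a :=
  mem_orbit_of_mem_orbit ⟨_, sigmaEquiv_mul_sigmaEquiv_mem_revFixSubgroup hk⟩ hx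

lemma intervalRoot_extend_left_mem_orbit {i j : ℕ} (hi : 1 ≤ i) (hij : i ≤ j) (hsum : i + j < 2 * m)
    (hx : intervalRoot i j ∈ orbit (revFixSubgroup m) a) :
    intervalRoot (i - 1) j ∈ orbit (revFixSubgroup m) a := by
  have h := sigma_pair_mem_orbit (k := i - 1) (by omega) hx
  rwa [sigma_intervalRoot_of_far _ (by omega) (by simp only; omega),
    sigma_intervalRoot_extend_left _ hij (by omega) (by simp only; omega)] at h

lemma intervalRoot_extend_right_mem_orbit {i j : ℕ} (hij : i ≤ j) (hsum : i + j + 1 < 2 * m)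
    (hx : intervalRoot i j ∈ orbit (revFixSubgroup m) a) :
    intervalRoot i (j + 1) ∈ orbit (revFixSubgroup m) a := by
  rcases lt_trichotomy (j + 1) m with hlt | heq | hgt
  · have h := sigma_pair_mem_orbit hlt hx
    rwa [sigma_intervalRoot_of_far _ (by omega) (by simp only; omega),
      sigma_intervalRoot_extend_right _ hij rfl] at h
  · have h := sigma_midVertex_mem_orbit hx
    rwa [sigma_intervalRoot_extend_right _ hij heq.symm] at h
  · have h := sigma_pair_mem_orbit (k := 2 * m - (j + 1)) (by omega) hx
    rwa [sigma_intervalRoot_extend_right _ hij (by simp only; omega),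
      sigma_intervalRoot_of_far _ (by omega) (by simp only; omega)] at h

lemma intervalRoot_shrink_right_mem_orbit {i j : ℕ} (hij : i < j) (hj : j < m)
    (hx : intervalRoot i j ∈ orbit (revFixSubgroup m) a) :
    intervalRoot i (j - 1) ∈ orbit (revFixSubgroup m) a := by
  have h := sigma_pair_mem_orbit hj hx
  rwa [sigma_intervalRoot_of_far _ (by omega) (by simp only; omega),
    sigma_intervalRoot_shrink_right _ hij rfl] at h

lemma intervalRoot_widen_mem_orbit {i j : ℕ} (hij : i < j) (hsum : i + j + 1 = 2 * m)
    (hx : intervalRoot (i + 1) j ∈ orbit (revFixSubgroup m) a) :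
    intervalRoot i (j + 1) ∈ orbit (revFixSubgroup m) a := by
  have h := sigma_pair_mem_orbit (k := i) (by omega) hx
  rwa [sigma_intervalRoot_extend_right _ hij (by simp only; omega),
    sigma_intervalRoot_extend_left _ (i := i + 1) (j := j + 1) (by omega) (by omega) rfl] at h

lemma intervalRoot_self_mem_revFixOrbit_pred {i : ℕ} (hi : i ≤ m - 1) :
    intervalRoot i i ∈ revFixOrbit m (m - 1) := by
  induction hi using Nat.decreasingInduction with
  | self => exact mem_orbit_self _
  | of_succ k hk ih =>
    have h := intervalRoot_extend_left_mem_orbit (i := k + 1) (j := k + 1) (by omega) le_rfl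
      (by omega) ih
    exact intervalRoot_shrink_right_mem_orbit (i := k) (j := k + 1) (by omega) (by omega) h

lemma intervalRoot_mem_revFixOrbit_pred_of_lt {i j : ℕ} (hij : i ≤ j) (hsum : i + j < 2 * m) :
    intervalRoot i j ∈ revFixOrbit m (m - 1) := by
  induction j, hij using Nat.le_induction with
  | base => exact intervalRoot_self_mem_revFixOrbit_pred (by omega)
  | succ j hij ih => exact intervalRoot_extend_right_mem_orbit hij hsum (ih (by omega))

lemma intervalRoot_mem_revFixOrbit_middle {i : ℕ} (hi : i ≤ m) :
    intervalRoot i (2 * m - i) ∈ revFixOrbit m m := by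
  induction hi using Nat.decreasingInduction with
  | self => rw [show 2 * m - m = m by omega]; exact mem_orbit_self _
  | of_succ k hk ih =>
    have h := intervalRoot_widen_mem_orbit (i := k) (j := 2 * m - (k + 1)) (by omega) (by omega) ih
    rwa [show 2 * m - (k + 1) + 1 = 2 * m - k by omega] at h

lemma intervalRoot_succ_self_mem_revFixOrbit_pred (hm : 1 ≤ m) :
    intervalRoot (m + 1) (m + 1) ∈ revFixOrbit m (m - 1) := by
  obtain ⟨k, rfl⟩ : ∃ k, m = k + 1 := ⟨m - 1, by omega⟩
  rw [Nat.add_sub_cancel]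
  have h1 := sigma_midVertex_mem_orbit (mem_orbit_self (M := revFixSubgroup (k + 1)) (intervalRoot k k))
  rw [sigma_intervalRoot_extend_right _ le_rfl rfl] at h1
  have h2 := sigma_pair_mem_orbit (k := k) (by omega) h1
  rw [sigma_intervalRoot_extend_right _ (by omega) (by simp only; omega),
    sigma_intervalRoot_shrink_left _ (i := k) (j := k + 1 + 1) (by omega) (by omega) rfl] at h2
  have h3 := sigma_midVertex_mem_orbit h2
  rwa [sigma_intervalRoot_shrink_left _ (i := k + 1) (j := k + 1 + 1) (by omega) (by omega) rfl] at h3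

lemma intervalRoot_mem_revFixOrbit_pred_of_gt {i j : ℕ} (hij : i ≤ j) (hj : j ≤ 2 * m)
    (hsum : 2 * m < i + j) :
    intervalRoot i j ∈ revFixOrbit m (m - 1) := by
  have h := permV_mem_orbit_fixSubgroup _ (Subgroup.mem_closure_singleton_self Fin.revPerm)
    (intervalRoot_mem_revFixOrbit_pred_of_lt (m := m) (i := 2 * m - j) (j := 2 * m - i) (by omega) (by omega))
  rw [permV_revPerm_intervalRoot (i := 2 * m - j) (j := 2 * m - i) (by omega) (by omega),
    permV_revPerm_intervalRoot le_rfl (by omega),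
    show 2 * m + 1 - 1 - (2 * m - i) = i by omega, show 2 * m + 1 - 1 - (2 * m - j) = j by omega,
    show 2 * m + 1 - 1 - (m - 1) = m + 1 by omega] at h
  rwa [revFixOrbit, ← orbit_eq_iff.2 (intervalRoot_succ_self_mem_revFixOrbit_pred (by omega))]

lemma intervalRoot_mem_revFixOrbits {i j : ℕ} (hij : i ≤ j) (hj : j ≤ 2 * m) :
    intervalRoot i j ∈ revFixOrbit m (m - 1) ∪ revFixOrbit m m := by
  rcases lt_trichotomy (i + j) (2 * m) with hlt | heq | hgt
  · exact .inl (intervalRoot_mem_revFixOrbit_pred_of_lt hij hlt)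
  · have h := intervalRoot_mem_revFixOrbit_middle (m := m) (i := i) (by omega)
    rw [show 2 * m - i = j by omega] at h
    exact .inr h
  · exact .inl (intervalRoot_mem_revFixOrbit_pred_of_gt hij hj hgt)

lemma neg_mem_revFixOrbit_middle {x : Fin (2 * m + 1) →₀ ℝ} (hx : x ∈ revFixOrbit m m) :
    -x ∈ revFixOrbit m m := by
  refine neg_mem_orbit_of_neg_mem ?_ hx
  have h := sigma_midVertex_mem_orbit (mem_orbit_self (M := revFixSubgroup m) (intervalRoot m m))
  rwa [sigma_intervalRoot_self _ (i := m) rfl] at h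

lemma neg_mem_revFixOrbit_pred {x : Fin (2 * m + 1) →₀ ℝ} (hx : x ∈ revFixOrbit m (m - 1)) :
    -x ∈ revFixOrbit m (m - 1) := by
  rcases Nat.eq_zero_or_pos m with rfl | hm
  · exact neg_mem_revFixOrbit_middle hx
  refine neg_mem_orbit_of_neg_mem ?_ hx
  have h := sigma_pair_mem_orbit (k := m - 1) (by omega)
    (mem_orbit_self (M := revFixSubgroup m) (intervalRoot (m - 1) (m - 1)))
  rwa [sigma_intervalRoot_of_far _ (by omega) (by simp only; omega),
    sigma_intervalRoot_self _ (i := m - 1) rfl] at h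

lemma intervalRoots_subset_revFixOrbits :
    intervalRoots (2 * m + 1) ⊆ revFixOrbit m (m - 1) ∪ revFixOrbit m m := by
  rintro _ ⟨i, j, hij, hj, rfl | rfl⟩
  · exact intervalRoot_mem_revFixOrbits (m := m) hij (by omega)
  · rcases intervalRoot_mem_revFixOrbits (m := m) hij (by omega) with h | h
    exacts [.inl (neg_mem_revFixOrbit_pred h), .inr (neg_mem_revFixOrbit_middle h)]

end Folding

/-- Vertices are numbered from `0`, so `α_m` and `α_{m+1}` are the simple roots at `m - 1` and
`m`. -/
theorem stmt15 (m : ℕ) :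
    (pathA (2 * m + 1)).Phi =
      {x | ∃ w ∈ (pathA (2 * m + 1)).WfixG
          (Subgroup.closure {(Fin.revPerm : Equiv.Perm (Fin (2 * m + 1)))}),
        x = w (sroot (⟨m - 1, by omega⟩ : Fin (2 * m + 1)))} ∪
      {x | ∃ w ∈ (pathA (2 * m + 1)).WfixG
          (Subgroup.closure {(Fin.revPerm : Equiv.Perm (Fin (2 * m + 1)))}),
        x = w (sroot (⟨m, by omega⟩ : Fin (2 * m + 1)))} := by
  rw [setOf_eq_orbit_fixSubgroup, setOf_eq_orbit_fixSubgroup]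
  refine Set.Subset.antisymm ?_
    (Set.union_subset (orbit_fixSubgroup_subset_Phi _ _ _) (orbit_fixSubgroup_subset_Phi _ _ _))
  rw [← intervalRoot_self, ← intervalRoot_self]
  exact Phi_pathA_subset_intervalRoots.trans intervalRoots_subset_revFixOrbits
end
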